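/- (Summation formula) For every positive integer n with ab ≠ 1, (1 − ab)·∑_{k=0}^{n−1} J_k = J_n·(1 − a^{ξ(n)} b^{1−ξ(n)}) + 2·J_{n−1}·(1 − a^{1−ξ(n)} b^{ξ(n)}) + J_1·(a − 1) + J_0·(2b − ab − 1), where ξ(n) = 0 if n is even and ξ(n) = 1 if n is odd. -/

import Mathlib

noncomputable def JM (a b : ℝ) : ℕ → Matrix (Fin 2) (Fin 2) ℝ
  | 0 => 1
  | 1 => !![b, 2 * b / a; 1, 0]
  | n + 2 => (if Even (n + 2) then a else b) • JM a b (n + 1) + (2 : ℝ) • JM a b n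

/-!
Write `c n = if Even n then a else b`, so that `c n * c (n + 1) = a * b`. For any sequence with
`x (n + 2) = c n • x (n + 1) + 2 • x n`, the right-hand side `F n` satisfies
`F (n + 1) - F n = (1 - c n * c (n + 1)) • x n = (1 - a * b) • x n`, and `F 1 = (1 - a * b) • x 0`,
so the identity telescopes.
-/

open Finset

section BiPeriodic

variable {R M : Type*} [CommRing R] [AddCommGroup M] [Module R M]

lemma ite_mul_ite_swap (P : Prop) [Decidable P] (a b : R) :
    (if P then b else a) * (if P then a else b) = a * b := by
  split_ifs <;> ring

lemma biperiodic_telescoping_step (p q : R) (u v w : M) (hw : w = q • v + (2 : R) • u) :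
    (1 - p) • w + (2 * (1 - q)) • v = (1 - q) • v + (2 * (1 - p)) • u + (1 - p * q) • v := by
  subst hw
  module

theorem smul_sum_range_succ_of_biperiodic (a b : R) (x : ℕ → M)
    (hx : ∀ n, x (n + 2) = (if Even n then a else b) • x (n + 1) + (2 : R) • x n) (m : ℕ) :
    (1 - a * b) • ∑ k ∈ range (m + 1), x k
      = (1 - (if Even (m + 1) then b else a)) • x (m + 1)
        + (2 * (1 - (if Even (m + 1) then a else b))) • x m
        + (a - 1) • x 1 + (2 * b - a * b - 1) • x 0 := by
  induction m with
  | zero =>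
    simp only [zero_add, sum_range_one, Nat.not_even_one, if_false]
    module
  | succ m ih =>
    have hstep := biperiodic_telescoping_step (if Even m then b else a) _ _ _ _ (hx m)
    rw [ite_mul_ite_swap] at hstep
    rw [sum_range_succ, smul_add, ih]
    simp only [Nat.even_add_one, not_not, ite_not]
    linear_combination (norm := module) -hstep

end BiPeriodic

lemma JM_add_two (a b : ℝ) (n : ℕ) :
    JM a b (n + 2) = (if Even n then a else b) • JM a b (n + 1) + (2 : ℝ) • JM a b n := by
  simp only [JM, Nat.even_add, even_two, iff_true]

theorem stmt10_general (a b : ℝ)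
    (n : ℕ) (hn : 1 ≤ n) :
    (1 - a * b) • ∑ k ∈ Finset.range n, JM a b k
      = (1 - (if Even n then b else a)) • JM a b n
        + (2 * (1 - (if Even n then a else b))) • JM a b (n - 1)
        + (a - 1) • JM a b 1 + (2 * b - a * b - 1) • JM a b 0 := by
  obtain ⟨m, rfl⟩ := Nat.exists_eq_add_of_le' hn
  simpa using smul_sum_range_succ_of_biperiodic a b (JM a b) (JM_add_two a b) m

theorem stmt10 (a b : ℝ) (ha : a ≠ 0) (hb : b ≠ 0) (hab : a * b ≠ 1)
    (n : ℕ) (hn : 1 ≤ n) :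
    (1 - a * b) • ∑ k ∈ Finset.range n, JM a b k
      = (1 - (if Even n then b else a)) • JM a b n
        + (2 * (1 - (if Even n then a else b))) • JM a b (n - 1)
        + (a - 1) • JM a b 1 + (2 * b - a * b - 1) • JM a b 0 :=
  stmt10_general a b n hn
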